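/- Let ∘ and ∗ be two group operations on a finite set G. If #{(x,y) ∈ G × G : x∘y = x∗y} > (7/9)·|G|², then the groups (G,∘) and (G,∗) are isomorphic. -/

import Mathlib

/-! Majority-vote correction in the style of Blum–Luby–Rubinfeld. Let `f : A → B` satisfy
`f (x * y) = f x * f y` on more than 7/9 of the pairs. For fixed `x`, the votes
`f (x * y) * (f y)⁻¹` for the value of a corrected map at `x` disagree on a pair `(y, z)` only if
`f` fails at `(x * z, z⁻¹ * y)` or at `(z, z⁻¹ * y)`; both maps are bijections of `A × A`, so the
votes agree on more than 5/9 of the pairs, and then a single value `h x` wins more than 2/3 of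
them. Any three such majorities meet, and the cocycle identity
`vote (x * y) z = vote x (y * z) * vote y z` turns a common point into `h (x * y) = h x * h y`.
Two majorities meet as well, so `h` is injective when `f` is. For the identity of `G`, viewed
between the two group structures, `h` is an injective homomorphism between groups of equal
finite order, hence an isomorphism.
-/

open Finset Function

theorem Finset.inter_inter_nonempty_of_card_lt {α : Type*} [Fintype α] [DecidableEq α]
    {s t u : Finset α} (h : 2 * Fintype.card α < #s + #t + #u) : (s ∩ t ∩ u).Nonempty := by
  have hst : #s + #t ≤ Fintype.card α + #(s ∩ t) := by
    rw [← card_union_add_card_inter]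
    exact Nat.add_le_add_right (card_le_univ _) _
  refine inter_nonempty_of_card_lt_card_add_card (subset_univ _) (subset_univ _) ?_
  rw [card_univ]
  omega

section Collisions

variable {α β : Type*} [Fintype α] [DecidableEq β]

theorem card_collisions_eq_sum (φ : α → β) :
    #{p : α × α | φ p.1 = φ p.2} = ∑ z, #{y | φ y = φ z} := by
  simp only [card_filter, Fintype.sum_prod_type_right]

theorem exists_card_fiber_gt_of_card_collisions (φ : α → β)
    (h : 5 * Fintype.card α ^ 2 < 9 * #{p : α × α | φ p.1 = φ p.2}) :
    ∃ c, 2 * Fintype.card α < 3 * #{y | φ y = c} := by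
  set n := Fintype.card α
  have hne : (univ : Finset α).Nonempty := by
    rw [univ_nonempty_iff]
    by_contra hα
    rw [not_nonempty_iff] at hα
    simp at h
  obtain ⟨z₀, -, hmax⟩ := exists_max_image univ (fun z => #{y | φ y = φ z}) hne
  refine ⟨φ z₀, ?_⟩
  set m := #{y | φ y = φ z₀}
  rw [card_collisions_eq_sum] at h
  have hm : m ≤ n := card_le_univ _
  have h_le_nm : ∑ z, #{y | φ y = φ z} ≤ n * m := by
    simpa using sum_le_card_nsmul univ _ m fun z _ => hmax z (mem_univ z)
  have h_le_sq : ∑ z, #{y | φ y = φ z} ≤ m * m + (n - m) * (n - m) := by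
    have hcompl : #{y | ¬ φ y = φ z₀} = n - m := by
      have := card_filter_add_card_filter_not (s := univ) fun y => φ y = φ z₀
      rw [card_univ] at this
      omega
    rw [← sum_filter_add_sum_filter_not univ fun z => φ z = φ z₀]
    gcongr
    · simpa using sum_le_card_nsmul _ _ m fun z _ => hmax z (mem_univ z)
    · refine (sum_le_card_nsmul _ _ (n - m) fun z hz => ?_).trans_eq (by rw [hcompl, smul_eq_mul])
      rw [← hcompl]
      refine card_le_card fun y hy => ?_
      simp only [mem_filter, mem_univ, true_and] at hy hz ⊢
      rwa [hy]
  -- With m = t n, the two bounds give t > 5/9 and (3t - 1)(3t - 2) > 0, hence t > 2/3.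
  clear_value n m
  obtain ⟨k, rfl⟩ := Nat.exists_eq_add_of_le hm
  rw [Nat.add_sub_cancel_left] at h_le_sq
  have hk : 5 * k < 4 * m := by nlinarith
  by_contra! hmk
  nlinarith

end Collisions

section Vote

variable {A B : Type*} [Group A] [Group B]

def vote (f : A → B) (x y : A) : B := f (x * y) * (f y)⁻¹

variable (f : A → B)

theorem vote_mul (x y z : A) : vote f (x * y) z = vote f x (y * z) * vote f y z := by
  simp only [vote, mul_assoc, inv_mul_cancel_left]

theorem vote_mul_right_eq {x z w : A} (h₁ : f (x * z * w) = f (x * z) * f w)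
    (h₂ : f (z * w) = f z * f w) : vote f x (z * w) = vote f x z := by
  simp only [vote, ← mul_assoc, h₁, h₂, mul_inv_rev, mul_inv_cancel_right]

theorem injective_vote_left (hf : Injective f) (z : A) : Injective (vote f · z) :=
  fun _ _ h => mul_right_cancel (hf (mul_right_cancel h))

variable [Fintype A] [DecidableEq B]

theorem card_vote_ne_le (x : A) :
    #{p : A × A | vote f x p.1 ≠ vote f x p.2} ≤
      2 * #{p : A × A | f (p.1 * p.2) ≠ f p.1 * f p.2} := by
  classical
  set F : Finset (A × A) := {p | f (p.1 * p.2) ≠ f p.1 * f p.2}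
  -- `shear (y, z) = (z, z⁻¹ * y)` and `shearLeft (y, z) = (x * z, z⁻¹ * y)`
  let shear : A × A ≃ A × A :=
    (Equiv.prodComm A A).trans (Equiv.prodShear (Equiv.refl A) fun z => Equiv.mulLeft z⁻¹)
  let shearLeft : A × A ≃ A × A := shear.trans ((Equiv.mulLeft x).prodCongr (Equiv.refl A))
  set F₁ : Finset (A × A) := {p | shearLeft p ∈ F}
  set F₂ : Finset (A × A) := {p | shear p ∈ F}
  have hsub : ({p | vote f x p.1 ≠ vote f x p.2} : Finset (A × A)) ⊆ F₁ ∪ F₂ := by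
    rintro ⟨y, z⟩ hyz
    contrapose! hyz
    simp only [F, F₁, F₂, mem_union, mem_filter, mem_univ, true_and, not_or, not_not] at hyz ⊢
    obtain ⟨h₁, h₂⟩ := hyz
    simpa using vote_mul_right_eq f (x := x) (z := z) (w := z⁻¹ * y) h₁ h₂
  calc _ ≤ #(F₁ ∪ F₂) := card_le_card hsub
    _ ≤ #F₁ + #F₂ := card_union_le _ _
    _ = 2 * #F := by
      rw [card_equiv shearLeft (s := F₁) (t := F) (by simp [F₁]),
        card_equiv shear (s := F₂) (t := F) (by simp [F₂]), two_mul]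

theorem exists_card_vote_gt
    (hf : 7 * Fintype.card A ^ 2 < 9 * #{p : A × A | f (p.1 * p.2) = f p.1 * f p.2}) (x : A) :
    ∃ c, 2 * Fintype.card A < 3 * #{y | vote f x y = c} := by
  refine exists_card_fiber_gt_of_card_collisions (vote f x) ?_
  have h_pairs : Fintype.card (A × A) = Fintype.card A ^ 2 := by
    rw [Fintype.card_prod, sq]
  have h_agree := card_filter_add_card_filter_not (s := univ) fun p : A × A =>
    vote f x p.1 = vote f x p.2
  have h_pass := card_filter_add_card_filter_not (s := univ) fun p : A × A =>
    f (p.1 * p.2) = f p.1 * f p.2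
  have h_fail := card_vote_ne_le f x
  simp only [ne_eq] at h_fail
  rw [card_univ, h_pairs] at h_agree h_pass
  omega

theorem exists_monoidHom_card_vote_gt
    (hf : 7 * Fintype.card A ^ 2 < 9 * #{p : A × A | f (p.1 * p.2) = f p.1 * f p.2}) :
    ∃ h : A →* B, ∀ x, 2 * Fintype.card A < 3 * #{y | vote f x y = h x} := by
  classical
  choose h hh using exists_card_vote_gt f hf
  refine ⟨MonoidHom.mk' h fun x y => ?_, hh⟩
  have hx : #{z | vote f x (y * z) = h x} = #{z | vote f x z = h x} :=
    card_equiv (Equiv.mulLeft y) (by simp)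
  obtain ⟨z, hz⟩ := inter_inter_nonempty_of_card_lt (s := {z | vote f x (y * z) = h x})
    (t := {z | vote f y z = h y}) (u := {z | vote f (x * y) z = h (x * y)})
    (by have := hh x; have := hh y; have := hh (x * y); omega)
  simp only [mem_inter, mem_filter, mem_univ, true_and] at hz
  obtain ⟨⟨hxz, hyz⟩, hxyz⟩ := hz
  rw [← hxyz, vote_mul, hxz, hyz]

theorem injective_of_card_vote_gt (hf : Injective f) {h : A → B}
    (hh : ∀ x, 2 * Fintype.card A < 3 * #{y | vote f x y = h x}) : Injective h := by
  classical
  intro x₁ x₂ hx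
  obtain ⟨z, hz⟩ := inter_nonempty_of_card_lt_card_add_card (s := univ)
    (t := {z | vote f x₁ z = h x₁}) (u := {z | vote f x₂ z = h x₂}) (subset_univ _)
    (subset_univ _) (by rw [card_univ]; have := hh x₁; have := hh x₂; omega)
  simp only [mem_inter, mem_filter, mem_univ, true_and] at hz
  exact injective_vote_left f hf z (hz.1.trans (hx.trans hz.2.symm))

end Vote

theorem nonempty_mulEquiv_of_card_map_mul_eq {A B : Type*} [Group A] [Group B] [Finite A]
    (f : A → B) (hf : Injective f) (hcard : Nat.card A = Nat.card B)
    (hmul : 7 * Nat.card A ^ 2 < 9 * Nat.card {p : A × A // f (p.1 * p.2) = f p.1 * f p.2}) :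
    Nonempty (A ≃* B) := by
  classical
  cases nonempty_fintype A
  have : Finite B := Nat.finite_of_card_ne_zero (hcard ▸ Nat.card_pos.ne')
  rw [Nat.card_eq_fintype_card, Nat.card_eq_fintype_card, Fintype.card_subtype] at hmul
  obtain ⟨h, hh⟩ := exists_monoidHom_card_vote_gt f hmul
  have h_bij : Bijective h :=
    (Nat.bijective_iff_injective_and_card h).2 ⟨injective_of_card_vote_gt f hf hh, hcard⟩
  exact ⟨MulEquiv.ofBijective h h_bij⟩

theorem stmt_14 {G : Type*} [Finite G] (g₁ g₂ : Group G)
    (hclose : 9 * Nat.card {p : G × G // g₁.mul p.1 p.2 = g₂.mul p.1 p.2}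
      > 7 * (Nat.card G) ^ 2) :
    ∃ e : G ≃ G, ∀ x y : G, e (g₁.mul x y) = g₂.mul (e x) (e y) := by
  obtain ⟨⟨e, he⟩⟩ := @nonempty_mulEquiv_of_card_map_mul_eq G G g₁ g₂ _ id injective_id rfl hclose
  exact ⟨e, he⟩
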